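/- The function Ψ tends to −∞ as ρ → 0⁺; that is, for every K > 0 there exists δ > 0 such that Ψ(ρ) < −K for all ρ with 0 < ρ < δ. -/

import Mathlib

/-- The relative pressure potential `G(ρ) = ρ ∫_{ρ̄}^{ρ} s⁻²(p(s) - p̄) ds`
    with `p(s) = a s^γ`. -/
noncomputable def Gfun (a γ ρb ρ : ℝ) : ℝ :=
  ρ * ∫ s in ρb..ρ, (a * s ^ γ - a * ρb ^ γ) / s ^ 2

/-- Kanel''s function `Ψ(ρ) = ∫_{ρ̄}^{ρ} √(G(s)) / s^{3/2} ds`. -/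
noncomputable def PsiFun (a γ ρb ρ : ℝ) : ℝ :=
  ∫ s in ρb..ρ, Real.sqrt (Gfun a γ ρb s) / s ^ ((3 : ℝ) / 2)

open intervalIntegral MeasureTheory Set Real Filter Topology

/-! Near `0` the potential `G` is bounded below by a positive constant: on `[s, 2s]` the
integrand of `G(s) = s ∫_s^{ρ̄} (p̄ - p(t)) / t² dt` is at least `(p̄ - p(2s)) / t²`, which
integrates to `(p̄ - p(2s)) / (2s)`, and the rest of the integrand is nonnegative. Hence the
integrand of `Ψ` is at least a positive multiple of `s^{-3/2}`, whose integral over `[ρ, ρ̄]`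
grows like `ρ^{-1/2}`. -/

lemma integral_le_integral_of_le_of_nonneg {f g : ℝ → ℝ} {a b d : ℝ} (hab : a ≤ b) (hbd : b ≤ d)
    (hg : IntervalIntegrable g volume a b) (hf : IntervalIntegrable f volume a d)
    (hgf : ∀ x ∈ Icc a b, g x ≤ f x) (hf₀ : ∀ x ∈ Ioc a d, 0 ≤ f x) :
    ∫ x in a..b, g x ≤ ∫ x in a..d, f x := by
  have hsub : uIcc a b ⊆ uIcc a d :=
    uIcc_subset_uIcc_left (by rw [uIcc_of_le (hab.trans hbd)]; exact ⟨hab, hbd⟩)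
  exact (integral_mono_on hab hg (hf.mono_set hsub) hgf).trans
    (integral_mono_interval le_rfl hab hbd
      ((ae_restrict_iff' measurableSet_Ioc).2 (ae_of_all _ hf₀)) hf)

lemma integral_const_div_sq {x y : ℝ} (c : ℝ) (hx : 0 < x) (hxy : x ≤ y) :
    ∫ t in x..y, c / t ^ 2 = c * (x⁻¹ - y⁻¹) := by
  have hpos : ∀ t ∈ uIcc x y, 0 < t := fun t ht => hx.trans_le (uIcc_of_le hxy ▸ ht).1
  rw [integral_eq_sub_of_hasDerivAt (f := fun t => -c * t⁻¹) (f' := fun t => c / t ^ 2)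
    (fun t ht => by simpa [div_eq_mul_inv] using (hasDerivAt_inv (hpos t ht).ne').const_mul (-c))
    (ContinuousOn.intervalIntegrable fun t ht => (continuousAt_const.div (continuousAt_pow t 2)
      (pow_ne_zero 2 (hpos t ht).ne')).continuousWithinAt)]
  ring

lemma integral_rpow_neg_three_halves {x y : ℝ} (hx : 0 < x) (hxy : x ≤ y) :
    ∫ t in x..y, t ^ (-(3 / 2 : ℝ)) = 2 * (x ^ (-(1 / 2 : ℝ)) - y ^ (-(1 / 2 : ℝ))) := by
  rw [integral_rpow (Or.inr ⟨by norm_num, by simp [uIcc_of_le hxy, hx.not_ge]⟩)]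
  norm_num
  ring

section

variable {a γ ρb : ℝ}

lemma continuousOn_Gfun (hρb : 0 < ρb) : ContinuousOn (Gfun a γ ρb) (Ioi 0) := by
  have hf : ContinuousOn (fun t : ℝ => (a * t ^ γ - a * ρb ^ γ) / t ^ 2) (Ioi 0) := by
    fun_prop (disch := intro; simp_all [ne_of_gt])
  refine continuousOn_id.mul fun x hx => ContinuousAt.continuousWithinAt ?_
  have hsub : uIcc ρb x ⊆ Ioi 0 := fun t ht => (lt_inf_iff.2 ⟨hρb, hx⟩).trans_le ht.1
  exact (integral_hasDerivAt_right (hf.mono hsub).intervalIntegrable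
    (hf.stronglyMeasurableAtFilter isOpen_Ioi x hx)
    (hf.continuousAt (isOpen_Ioi.mem_nhds hx))).continuousAt

lemma Gfun_eq_mul_integral (s : ℝ) :
    Gfun a γ ρb s = s * ∫ t in s..ρb, (a * ρb ^ γ - a * t ^ γ) / t ^ 2 := by
  rw [Gfun, integral_symm, ← intervalIntegral.integral_neg]
  simp only [← neg_div, neg_sub]

lemma pressure_gap_div_two_le_Gfun (ha : 0 ≤ a) (hγ : 0 ≤ γ) {s : ℝ} (hs : 0 < s)
    (hsρb : 2 * s ≤ ρb) : (a * ρb ^ γ - a * (2 * s) ^ γ) / 2 ≤ Gfun a γ ρb s := by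
  set c := a * ρb ^ γ - a * (2 * s) ^ γ
  have hf : ContinuousOn (fun t : ℝ => (a * ρb ^ γ - a * t ^ γ) / t ^ 2) (Ioi 0) := by
    fun_prop (disch := intro; simp_all [ne_of_gt])
  have hsub : ∀ {u}, s ≤ u → uIcc s u ⊆ Ioi 0 :=
    fun hu t ht => hs.trans_le (uIcc_of_le hu ▸ ht).1
  have key : c / (2 * s) ≤ ∫ t in s..ρb, (a * ρb ^ γ - a * t ^ γ) / t ^ 2 := by
    calc c / (2 * s) = ∫ t in s..2 * s, c / t ^ 2 := by
          rw [integral_const_div_sq c hs (by linarith)]; field_simp; ring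
      _ ≤ _ := integral_le_integral_of_le_of_nonneg (by linarith) hsρb
          (ContinuousOn.intervalIntegrable fun t ht => ((continuousAt_const.div
            (continuousAt_pow t 2) (pow_ne_zero 2 (hsub (by linarith) ht).ne')).continuousWithinAt))
          ((hf.mono (hsub (by linarith))).intervalIntegrable)
          (fun t ht => by simp only [c]; gcongr; exacts [(hs.trans_le ht.1).le, ht.2])
          (fun t ht => by
            have : a * t ^ γ ≤ a * ρb ^ γ := by gcongr; exacts [(hs.trans ht.1).le, ht.2]
            exact div_nonneg (by linarith) (sq_nonneg t))
  rw [Gfun_eq_mul_integral]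
  calc c / 2 = s * (c / (2 * s)) := by field_simp
    _ ≤ _ := by gcongr

lemma PsiFun_le_of_four_mul_le (ha : 0 ≤ a) (hγ : 0 ≤ γ) {ρ : ℝ} (hρ : 0 < ρ)
    (hρρb : 4 * ρ ≤ ρb) :
    PsiFun a γ ρb ρ ≤ -2 * √((a * ρb ^ γ - a * (ρb / 2) ^ γ) / 2) *
      (ρ ^ (-(1 / 2 : ℝ)) - (ρb / 4) ^ (-(1 / 2 : ℝ))) := by
  set k := √((a * ρb ^ γ - a * (ρb / 2) ^ γ) / 2)
  have hρb : 0 < ρb := by linarith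
  have hcont : ContinuousOn (fun s => √(Gfun a γ ρb s) / s ^ ((3 : ℝ) / 2)) (Ioi 0) :=
    (continuousOn_Gfun hρb).sqrt.div (by fun_prop (disch := intro; simp_all [ne_of_gt]))
      fun s hs => (rpow_pos_of_pos hs _).ne'
  have hsub : ∀ {u}, ρ ≤ u → uIcc ρ u ⊆ Ioi 0 :=
    fun hu t ht => hρ.trans_le (uIcc_of_le hu ▸ ht).1
  have hG : ∀ s ∈ Icc ρ (ρb / 4), k ≤ √(Gfun a γ ρb s) := fun s hs => by
    have hs0 : 0 < s := hρ.trans_le hs.1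
    refine sqrt_le_sqrt ((div_le_div_of_nonneg_right ?_ zero_le_two).trans
      (pressure_gap_div_two_le_Gfun ha hγ hs0 (by linarith [hs.2])))
    gcongr
    linarith [hs.2]
  have key : k * ∫ s in ρ..ρb / 4, s ^ (-(3 / 2 : ℝ)) ≤
      ∫ s in ρ..ρb, √(Gfun a γ ρb s) / s ^ ((3 : ℝ) / 2) := by
    rw [← intervalIntegral.integral_const_mul]
    refine integral_le_integral_of_le_of_nonneg (by linarith) (by linarith)
      (ContinuousOn.intervalIntegrable ?_) ((hcont.mono (hsub (by linarith))).intervalIntegrable)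
      (fun s hs => ?_) (fun s hs => by have := hρ.trans hs.1; positivity)
    · exact continuousOn_const.mul fun s hs => (continuousAt_rpow_const _ _
        (Or.inl (hsub (by linarith) hs).ne')).continuousWithinAt
    · rw [rpow_neg (hρ.trans_le hs.1).le, ← div_eq_mul_inv]
      exact div_le_div_of_nonneg_right (hG s hs) (by have := hρ.trans_le hs.1; positivity)
  rw [integral_rpow_neg_three_halves hρ (by linarith)] at key
  rw [PsiFun, integral_symm]
  linarith

theorem tendsto_PsiFun_nhdsGT_zero (ha : 0 < a) (hγ : 0 < γ) (hρb : 0 < ρb) :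
    Tendsto (PsiFun a γ ρb) (𝓝[>] 0) atBot := by
  set k := √((a * ρb ^ γ - a * (ρb / 2) ^ γ) / 2)
  have hk : 0 < k := by
    have : a * (ρb / 2) ^ γ < a * ρb ^ γ := by gcongr; linarith
    exact sqrt_pos.2 (by linarith)
  refine tendsto_atBot_mono' _ ?_ (Tendsto.const_mul_atTop_of_neg (by linarith : -2 * k < 0)
    (tendsto_atTop_add_const_right _ (-(ρb / 4) ^ (-(1 / 2 : ℝ)))
      (tendsto_rpow_neg_nhdsGT_zero (by norm_num : -(1 / 2 : ℝ) < 0))))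
  filter_upwards [Ioc_mem_nhdsGT (by linarith : (0 : ℝ) < ρb / 4)] with ρ hρ
  exact PsiFun_le_of_four_mul_le ha.le hγ.le hρ.1 (by linarith [hρ.2])

end

theorem PsiFun_tendsto_atBot (a γ ρb : ℝ) (ha : 0 < a) (hγ : 1 ≤ γ) (hρb : 0 < ρb) :
    ∀ K : ℝ, 0 < K → ∃ δ : ℝ, 0 < δ ∧ ∀ ρ : ℝ, 0 < ρ → ρ < δ → PsiFun a γ ρb ρ < -K := by
  intro K _
  have hΨ := tendsto_PsiFun_nhdsGT_zero ha (one_pos.trans_le hγ) hρb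
  obtain ⟨δ, hδ, hδK⟩ := (nhdsGT_basis 0).eventually_iff.mp
    (hΨ.eventually (eventually_lt_atBot (-K)))
  exact ⟨δ, hδ, fun ρ hρ hρδ => hδK ⟨hρ, hρδ⟩⟩
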